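/- Let A ∈ M_N(ℂ) and 0 < γ < 1, and set X = exp_∘(iγA). Then (1/N) Σ_{k=2}^N | σ_k(X/γ) − σ_k(A) | ≤ γ exp(‖A‖) + 2‖A‖/N. -/

import Mathlib

open Matrix

/-- The decreasingly ordered eigenvalues of the Hermitian matrix `A * Aᴴ`. -/
noncomputable def evalsDesc {N : ℕ} (A : Matrix (Fin N) (Fin N) ℂ) : Fin N → ℝ :=
  fun k =>
    (Matrix.isHermitian_mul_conjTranspose_self A).eigenvalues
      (Tuple.sort (fun i => -(Matrix.isHermitian_mul_conjTranspose_self A).eigenvalues i) k)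

/-- The decreasingly ordered singular values `σ_1(A) ≥ ⋯ ≥ σ_N(A)` of a complex matrix `A`,
i.e. the decreasingly ordered nonnegative square roots of the eigenvalues of `A * Aᴴ`.
Here `svalsDesc A k` is `σ_{k+1}(A)` (indices are 0-based). -/
noncomputable def svalsDesc {N : ℕ} (A : Matrix (Fin N) (Fin N) ℂ) : Fin N → ℝ :=
  fun k => Real.sqrt (evalsDesc A k)

/-- The operator norm (largest singular value) of a complex matrix, realized as the norm of
the induced linear operator on Euclidean space. -/
noncomputable def opNorm {m n : ℕ} (A : Matrix (Fin m) (Fin n) ℂ) : ℝ :=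
  ‖LinearMap.toContinuousLinearMap (Matrix.toEuclideanLin A)‖

/-- The entrywise exponential of a complex matrix. -/
noncomputable def entrywiseExp {m n : ℕ} (A : Matrix (Fin m) (Fin n) ℂ) :
    Matrix (Fin m) (Fin n) ℂ :=
  Matrix.of fun k l => Complex.exp (A k l)

/-- The `N × N` all-ones matrix. -/
def allOnes (N : ℕ) : Matrix (Fin N) (Fin N) ℂ :=
  Matrix.of fun _ _ => (1 : ℂ)

open Finset
open scoped Matrix.Norms.L2Operator

/-!
Write `X / γ = i A + γ⁻¹ J + E` with `J` the all-ones matrix. Expanding the entrywise exponential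
in its Taylor series and bounding Hadamard powers by Schur's inequality `‖B ⊙ C‖ ≤ ‖B‖ ‖C‖` gives
`‖E‖ ≤ γ e^{‖A‖}`, and by Weyl's inequality `E` moves every singular value by at most `‖E‖`.
Since `J` has rank one, the singular values of `i A + γ⁻¹ J` interlace with those of `A`,
`σ_{k+1}(A) ≤ σ_k(i A + γ⁻¹ J) ≤ σ_{k-1}(A)`, so `|σ_k(i A + γ⁻¹ J) - σ_k(A)|` is at most
`σ_{k-1}(A) - σ_{k+1}(A)`, and these bounds telescope to at most `σ_1(A) + σ_2(A) ≤ 2 ‖A‖`.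
-/

section L2OpNorm

variable {m n 𝕜 : Type*} [Fintype m] [Fintype n] [DecidableEq n] [RCLike 𝕜]

lemma Matrix.sum_norm_sq_col_le_l2_opNorm_sq (M : Matrix m n 𝕜) (l : n) :
    ∑ k, ‖M k l‖ ^ 2 ≤ ‖M‖ ^ 2 := by
  have h := M.l2_opNorm_mulVec (EuclideanSpace.single l 1)
  rw [PiLp.norm_single, norm_one, mul_one] at h
  calc ∑ k, ‖M k l‖ ^ 2
      = ‖(EuclideanSpace.equiv m 𝕜).symm (M *ᵥ EuclideanSpace.single l (1 : 𝕜))‖ ^ 2 := by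
        simp [EuclideanSpace.norm_sq_eq]
    _ ≤ ‖M‖ ^ 2 := by gcongr

lemma Matrix.sum_norm_sq_row_le_l2_opNorm_sq [DecidableEq m] (M : Matrix m n 𝕜) (k : m) :
    ∑ l, ‖M k l‖ ^ 2 ≤ ‖M‖ ^ 2 := by
  simpa [← l2_opNorm_conjTranspose M] using Mᴴ.sum_norm_sq_col_le_l2_opNorm_sq k

lemma Matrix.l2_opNorm_hadamard_le_of_rows_cols (P Q : Matrix m n 𝕜) {r c : ℝ}
    (hr : 0 ≤ r) (hc : 0 ≤ c) (hP : ∀ k, ∑ l, ‖P k l‖ ^ 2 ≤ r ^ 2)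
    (hQ : ∀ l, ∑ k, ‖Q k l‖ ^ 2 ≤ c ^ 2) : ‖P ⊙ Q‖ ≤ r * c := by
  rw [l2_opNorm_def]
  refine ContinuousLinearMap.opNorm_le_bound _ (by positivity) fun x => ?_
  have hrow : ∀ k, ‖∑ l, P k l * Q k l * x l‖ ^ 2 ≤ r ^ 2 * ∑ l, ‖Q k l‖ ^ 2 * ‖x l‖ ^ 2 := by
    intro k
    calc ‖∑ l, P k l * Q k l * x l‖ ^ 2 ≤ (∑ l, ‖P k l‖ * (‖Q k l‖ * ‖x l‖)) ^ 2 := by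
          gcongr
          refine (norm_sum_le _ _).trans_eq ?_
          simp only [norm_mul, mul_assoc]
      _ ≤ (∑ l, ‖P k l‖ ^ 2) * ∑ l, (‖Q k l‖ * ‖x l‖) ^ 2 := sum_mul_sq_le_sq_mul_sq _ _ _
      _ ≤ r ^ 2 * ∑ l, ‖Q k l‖ ^ 2 * ‖x l‖ ^ 2 := by
          simp only [mul_pow]
          gcongr
          exact hP k
  rw [← pow_le_pow_iff_left₀ (norm_nonneg _) (by positivity) two_ne_zero]
  calc _ = ∑ k, ‖∑ l, P k l * Q k l * x l‖ ^ 2 := by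
        simp [EuclideanSpace.norm_sq_eq, mulVec, dotProduct]
    _ ≤ ∑ k, r ^ 2 * ∑ l, ‖Q k l‖ ^ 2 * ‖x l‖ ^ 2 := sum_le_sum fun k _ => hrow k
    _ = r ^ 2 * ∑ l, (∑ k, ‖Q k l‖ ^ 2) * ‖x l‖ ^ 2 := by
        rw [← mul_sum, sum_comm]
        simp only [sum_mul]
    _ ≤ r ^ 2 * ∑ l, c ^ 2 * ‖x l‖ ^ 2 := by gcongr with l; exact hQ l
    _ = (r * c * ‖x‖) ^ 2 := by
        rw [← mul_sum, ← EuclideanSpace.norm_sq_eq]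
        ring

lemma Matrix.norm_toEuclideanLin_conjTranspose_apply_le [DecidableEq m] (M : Matrix m n 𝕜)
    (x : EuclideanSpace 𝕜 m) : ‖toEuclideanLin Mᴴ x‖ ≤ ‖M‖ * ‖x‖ := by
  rw [← l2_opNorm_conjTranspose M]
  exact Mᴴ.l2_opNorm_mulVec x

lemma Matrix.l2_opNorm_hadamard_le [DecidableEq m] (P Q : Matrix m n 𝕜) :
    ‖P ⊙ Q‖ ≤ ‖P‖ * ‖Q‖ :=
  l2_opNorm_hadamard_le_of_rows_cols P Q (norm_nonneg P) (norm_nonneg Q)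
    P.sum_norm_sq_row_le_l2_opNorm_sq Q.sum_norm_sq_col_le_l2_opNorm_sq

lemma Matrix.l2_opNorm_map_pow_succ_le [DecidableEq m] (A : Matrix m n 𝕜) (k : ℕ) :
    ‖A.map (· ^ (k + 1))‖ ≤ ‖A‖ ^ (k + 1) := by
  induction k with
  | zero => simp
  | succ k ih =>
    have h : A.map (· ^ (k + 2)) = A ⊙ A.map (· ^ (k + 1)) := by
      ext i j
      simp [pow_succ']
    rw [h, pow_succ']
    exact (A.l2_opNorm_hadamard_le _).trans (by gcongr)

end L2OpNorm

open Nat in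
lemma hasSum_entrywiseExp_smul {m n : ℕ} (A : Matrix (Fin m) (Fin n) ℂ) (z : ℂ) :
    HasSum (fun k => (z ^ k / k !) • A.map (· ^ k)) (entrywiseExp (z • A)) := by
  refine Pi.hasSum.mpr fun i => Pi.hasSum.mpr fun j => ?_
  have h := NormedSpace.expSeries_div_hasSum_exp (z * A i j)
  rw [← Complex.exp_eq_exp_ℂ] at h
  have hterm : (fun k => ((z ^ k / k !) • A.map (· ^ k)) i j) = fun k => (z * A i j) ^ k / k ! := by
    ext k
    simp only [Matrix.smul_apply, map_apply, smul_eq_mul]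
    ring
  rw [hterm]
  exact h

open Nat in
lemma norm_entrywiseExp_smul_sub_le {N : ℕ} (A : Matrix (Fin N) (Fin N) ℂ) {z : ℂ}
    (hz : ‖z‖ ≤ 1) :
    ‖entrywiseExp (z • A) - allOnes N - z • A‖ ≤ ‖z‖ ^ 2 * Real.exp ‖A‖ := by
  have hhead : ∑ k ∈ range 2, (z ^ k / k !) • A.map (· ^ k) = allOnes N + z • A := by
    ext i j
    simp [sum_range_succ, allOnes]
  have htail := (hasSum_nat_add_iff' 2).mpr (hasSum_entrywiseExp_smul A z)
  rw [hhead, ← sub_sub] at htail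
  have hexp := NormedSpace.expSeries_div_hasSum_exp ‖A‖
  rw [← Real.exp_eq_exp_ℝ] at hexp
  have hbound := ((hasSum_nat_add_iff' 2).mpr hexp).mul_left (‖z‖ ^ 2)
  refine (htail.norm_le_of_bounded hbound fun k => ?_).trans ?_
  · rw [norm_smul, norm_div, norm_pow, Complex.norm_natCast, mul_div_assoc', div_mul_eq_mul_div]
    have hz' : ‖z‖ ^ (k + 2) ≤ ‖z‖ ^ 2 := pow_le_pow_of_le_one (norm_nonneg z) hz (by omega)
    have hA := A.l2_opNorm_map_pow_succ_le (k + 1)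
    gcongr ?_ / _
    exact mul_le_mul hz' hA (norm_nonneg _) (by positivity)
  · gcongr
    exact sub_le_self _ (sum_nonneg fun k _ => by positivity)

section OrthonormalBasis

open scoped InnerProductSpace

variable {ι 𝕜 E : Type*} [Fintype ι] [RCLike 𝕜] [NormedAddCommGroup E] [InnerProductSpace 𝕜 E]
  (b : OrthonormalBasis ι 𝕜 E)

lemma OrthonormalBasis.re_inner_map_self_eq_sum {T : E →ₗ[𝕜] E} (hT : T.IsSymmetric) {μ : ι → ℝ}
    (hb : ∀ i, T (b i) = (μ i : 𝕜) • b i) (x : E) :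
    RCLike.re ⟪T x, x⟫_𝕜 = ∑ i, μ i * ‖⟪b i, x⟫_𝕜‖ ^ 2 := by
  have hterm : ∀ i, ⟪T x, b i⟫_𝕜 * ⟪b i, x⟫_𝕜 = ((μ i * ‖⟪b i, x⟫_𝕜‖ ^ 2 : ℝ) : 𝕜) := by
    intro i
    rw [hT, hb, inner_smul_right, ← inner_conj_symm x, mul_assoc, RCLike.conj_mul]
    push_cast
    ring
  rw [← b.sum_inner_mul_inner (T x) x]
  simp only [hterm, ← RCLike.ofReal_sum, RCLike.ofReal_re]

lemma OrthonormalBasis.inner_eq_zero_of_mem_span_image {S : Set ι} {x : E}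
    (hx : x ∈ Submodule.span 𝕜 (b '' S)) {i : ι} (hi : i ∉ S) : ⟪b i, x⟫_𝕜 = 0 := by
  rw [← OrthonormalBasis.coe_toBasis, Module.Basis.mem_span_image] at hx
  rw [← b.repr_apply_apply, ← b.coe_toBasis_repr_apply]
  exact Finsupp.notMem_support_iff.mp fun h => hi (hx h)

lemma OrthonormalBasis.finrank_span_image (S : Finset ι) :
    Module.finrank 𝕜 (Submodule.span 𝕜 (b '' S)) = S.card := by
  have h := finrank_span_eq_card (b.orthonormal.linearIndependent.comp _ Subtype.val_injective :
    LinearIndependent 𝕜 fun i : (S : Set ι) => b i)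
  rw [Set.range_comp, Subtype.range_coe] at h
  simpa using h

end OrthonormalBasis

section SingularValues

open scoped InnerProductSpace

variable {N : ℕ} (C : Matrix (Fin N) (Fin N) ℂ)

noncomputable def sortedEigenbasis : OrthonormalBasis (Fin N) ℂ (EuclideanSpace ℂ (Fin N)) :=
  (isHermitian_mul_conjTranspose_self C).eigenvectorBasis.reindex
    (Tuple.sort fun i => -(isHermitian_mul_conjTranspose_self C).eigenvalues i).symm

lemma toEuclideanLin_mul_conjTranspose_sortedEigenbasis (k : Fin N) :
    toEuclideanLin (C * Cᴴ) (sortedEigenbasis C k) =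
      (evalsDesc C k : ℂ) • sortedEigenbasis C k := by
  ext i
  have h := congrFun ((isHermitian_mul_conjTranspose_self C).mulVec_eigenvectorBasis
    ((Tuple.sort fun i => -(isHermitian_mul_conjTranspose_self C).eigenvalues i) k)) i
  simpa [sortedEigenbasis, evalsDesc, toLpLin_apply, Complex.real_smul] using h

lemma norm_sq_toEuclideanLin_conjTranspose (x : EuclideanSpace ℂ (Fin N)) :
    ‖toEuclideanLin Cᴴ x‖ ^ 2 = ∑ k, evalsDesc C k * ‖⟪sortedEigenbasis C k, x⟫_ℂ‖ ^ 2 := by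
  have hsymm := isSymmetric_toEuclideanLin_iff.mpr (isHermitian_mul_conjTranspose_self C)
  rw [← (sortedEigenbasis C).re_inner_map_self_eq_sum hsymm (μ := evalsDesc C)
    (toEuclideanLin_mul_conjTranspose_sortedEigenbasis C), ← inner_self_eq_norm_sq (𝕜 := ℂ),
    toEuclideanLin_conjTranspose_eq_adjoint, LinearMap.adjoint_inner_right,
    ← toEuclideanLin_conjTranspose_eq_adjoint]
  simp only [toLpLin_apply, mulVec_mulVec]

lemma evalsDesc_antitone : Antitone (evalsDesc C) := fun j k hjk => by
  simpa [evalsDesc] using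
    Tuple.monotone_sort (fun i => -(isHermitian_mul_conjTranspose_self C).eigenvalues i) hjk

lemma evalsDesc_nonneg (k : Fin N) : 0 ≤ evalsDesc C k :=
  eigenvalues_self_mul_conjTranspose_nonneg C _

lemma svalsDesc_nonneg (k : Fin N) : 0 ≤ svalsDesc C k := Real.sqrt_nonneg _

lemma svalsDesc_antitone : Antitone (svalsDesc C) := fun _ _ hjk =>
  Real.sqrt_le_sqrt (evalsDesc_antitone C hjk)

lemma evalsDesc_mul_norm_sq_le_of_mem_span {k : Fin N} {x : EuclideanSpace ℂ (Fin N)}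
    (hx : x ∈ Submodule.span ℂ (sortedEigenbasis C '' Set.Iic k)) :
    evalsDesc C k * ‖x‖ ^ 2 ≤ ‖toEuclideanLin Cᴴ x‖ ^ 2 := by
  rw [norm_sq_toEuclideanLin_conjTranspose, ← (sortedEigenbasis C).sum_sq_norm_inner_right,
    mul_sum]
  refine sum_le_sum fun i _ => ?_
  by_cases hi : i ∈ Set.Iic k
  · exact mul_le_mul_of_nonneg_right (evalsDesc_antitone C hi) (sq_nonneg _)
  · simp [(sortedEigenbasis C).inner_eq_zero_of_mem_span_image hx hi]

lemma norm_toEuclideanLin_conjTranspose_le_of_mem_span {k : Fin N} {x : EuclideanSpace ℂ (Fin N)}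
    (hx : x ∈ Submodule.span ℂ (sortedEigenbasis C '' Set.Ici k)) :
    ‖toEuclideanLin Cᴴ x‖ ≤ svalsDesc C k * ‖x‖ := by
  have hsq : ‖toEuclideanLin Cᴴ x‖ ^ 2 ≤ evalsDesc C k * ‖x‖ ^ 2 := by
    rw [norm_sq_toEuclideanLin_conjTranspose, ← (sortedEigenbasis C).sum_sq_norm_inner_right,
      mul_sum]
    refine sum_le_sum fun i _ => ?_
    by_cases hi : i ∈ Set.Ici k
    · exact mul_le_mul_of_nonneg_right (evalsDesc_antitone C hi) (sq_nonneg _)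
    · simp [(sortedEigenbasis C).inner_eq_zero_of_mem_span_image hx hi]
  rw [← pow_le_pow_iff_left₀ (norm_nonneg _) (by positivity [svalsDesc_nonneg C k]) two_ne_zero,
    mul_pow, svalsDesc, Real.sq_sqrt (evalsDesc_nonneg C k)]
  exact hsq

lemma finrank_span_sortedEigenbasis_Ici (k : Fin N) :
    Module.finrank ℂ (Submodule.span ℂ (sortedEigenbasis C '' Set.Ici k)) = N - k := by
  have h := (sortedEigenbasis C).finrank_span_image (Finset.Ici k)
  rwa [Finset.coe_Ici, Fin.card_Ici] at h

/-- Courant–Fischer: such a `V` meets the span of the top `k + 1` eigenvectors of `C * Cᴴ`. -/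
lemma svalsDesc_le_of_forall_mem (k : Fin N) (V : Submodule ℂ (EuclideanSpace ℂ (Fin N)))
    (hV : N ≤ Module.finrank ℂ V + k) {c : ℝ} (hc : 0 ≤ c)
    (h : ∀ x ∈ V, ‖toEuclideanLin Cᴴ x‖ ≤ c * ‖x‖) : svalsDesc C k ≤ c := by
  set W := Submodule.span ℂ (sortedEigenbasis C '' Set.Iic k)
  have hW : Module.finrank ℂ W = k + 1 := by
    have h := (sortedEigenbasis C).finrank_span_image (Finset.Iic k)
    rwa [Finset.coe_Iic, Fin.card_Iic] at h
  have hVW : V ⊓ W ≠ ⊥ := by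
    intro hbot
    have hsum := Submodule.finrank_sup_add_finrank_inf_eq V W
    have hsup := (V ⊔ W).finrank_le
    rw [hbot, finrank_bot] at hsum
    rw [finrank_euclideanSpace_fin] at hsup
    omega
  obtain ⟨x, ⟨hxV, hxW⟩, hx0⟩ := (Submodule.ne_bot_iff _).mp hVW
  have hxpos : 0 < ‖x‖ ^ 2 := by positivity
  have hev : evalsDesc C k ≤ c ^ 2 := by
    refine le_of_mul_le_mul_right ?_ hxpos
    calc evalsDesc C k * ‖x‖ ^ 2 ≤ ‖toEuclideanLin Cᴴ x‖ ^ 2 :=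
          evalsDesc_mul_norm_sq_le_of_mem_span C hxW
      _ ≤ (c * ‖x‖) ^ 2 := by gcongr; exact h x hxV
      _ = c ^ 2 * ‖x‖ ^ 2 := mul_pow _ _ _
  exact Real.sqrt_le_iff.mpr ⟨hc, hev⟩

end SingularValues

section SingularValueInequalities

variable {N : ℕ}

lemma svalsDesc_le_l2_opNorm (C : Matrix (Fin N) (Fin N) ℂ) (k : Fin N) : svalsDesc C k ≤ ‖C‖ := by
  refine svalsDesc_le_of_forall_mem C k ⊤ ?_ (norm_nonneg C) fun x _ => ?_
  · rw [finrank_top, finrank_euclideanSpace_fin]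
    omega
  · exact C.norm_toEuclideanLin_conjTranspose_apply_le x

lemma svalsDesc_add_le (P Q : Matrix (Fin N) (Fin N) ℂ) (k : Fin N) :
    svalsDesc (P + Q) k ≤ svalsDesc P k + ‖Q‖ := by
  refine svalsDesc_le_of_forall_mem (P + Q) k
    (Submodule.span ℂ (sortedEigenbasis P '' Set.Ici k)) ?_
    (by positivity [svalsDesc_nonneg P k]) fun x hx => ?_
  · rw [finrank_span_sortedEigenbasis_Ici]
    omega
  · calc ‖toEuclideanLin (P + Q)ᴴ x‖ = ‖toEuclideanLin Pᴴ x + toEuclideanLin Qᴴ x‖ := by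
          simp [conjTranspose_add]
      _ ≤ svalsDesc P k * ‖x‖ + ‖Q‖ * ‖x‖ :=
          (norm_add_le _ _).trans
            (add_le_add (norm_toEuclideanLin_conjTranspose_le_of_mem_span P hx)
              (Q.norm_toEuclideanLin_conjTranspose_apply_le x))
      _ = (svalsDesc P k + ‖Q‖) * ‖x‖ := by ring

open scoped ComplexOrder in
lemma finrank_ker_toEuclideanLin_conjTranspose (R : Matrix (Fin N) (Fin N) ℂ) :
    R.rank + Module.finrank ℂ (LinearMap.ker (toEuclideanLin Rᴴ)) = N := by
  rw [← rank_conjTranspose, rank_eq_finrank_range_toLin Rᴴ (EuclideanSpace.basisFun _ ℂ).toBasis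
    (EuclideanSpace.basisFun _ ℂ).toBasis, ← toEuclideanLin_eq_toLin_orthonormal,
    LinearMap.finrank_range_add_finrank_ker, finrank_euclideanSpace_fin]

lemma svalsDesc_add_le_of_rank_le (P R : Matrix (Fin N) (Fin N) ℂ) {r : ℕ} (hR : R.rank ≤ r)
    {j k : Fin N} (hjk : (j : ℕ) + r = k) : svalsDesc (P + R) k ≤ svalsDesc P j := by
  set V := Submodule.span ℂ (sortedEigenbasis P '' Set.Ici j)
  set K := LinearMap.ker (toEuclideanLin Rᴴ)
  refine svalsDesc_le_of_forall_mem (P + R) k (V ⊓ K) ?_ (svalsDesc_nonneg P j) fun x hx => ?_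
  · have hsum := Submodule.finrank_sup_add_finrank_inf_eq V K
    have hsup := (V ⊔ K).finrank_le
    have hV : Module.finrank ℂ V = N - j := finrank_span_sortedEigenbasis_Ici P j
    have hK : R.rank + Module.finrank ℂ K = N := finrank_ker_toEuclideanLin_conjTranspose R
    rw [finrank_euclideanSpace_fin] at hsup
    have := k.isLt
    omega
  · have hRx : toEuclideanLin Rᴴ x = 0 := hx.2
    have hPR : toEuclideanLin (P + R)ᴴ x = toEuclideanLin Pᴴ x := by
      simp [conjTranspose_add, hRx]
    rw [hPR]
    exact norm_toEuclideanLin_conjTranspose_le_of_mem_span P hx.1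

lemma svalsDesc_smul_of_norm_eq_one (C : Matrix (Fin N) (Fin N) ℂ) {u : ℂ} (hu : ‖u‖ = 1) :
    svalsDesc (u • C) = svalsDesc C := by
  have h : (u • C) * (u • C)ᴴ = C * Cᴴ := by
    rw [conjTranspose_smul, Matrix.smul_mul, Matrix.mul_smul, smul_smul, ← starRingEnd_apply,
      RCLike.mul_conj, hu]
    simp
  unfold svalsDesc evalsDesc
  simp_rw [h]

end SingularValueInequalities

section PaddedSingularValues

variable {N : ℕ}

noncomputable def svalsNat (A : Matrix (Fin N) (Fin N) ℂ) (n : ℕ) : ℝ :=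
  if h : n < N then svalsDesc A ⟨n, h⟩ else 0

lemma svalsNat_of_lt (A : Matrix (Fin N) (Fin N) ℂ) {n : ℕ} (h : n < N) :
    svalsNat A n = svalsDesc A ⟨n, h⟩ :=
  dif_pos h

lemma svalsNat_of_le (A : Matrix (Fin N) (Fin N) ℂ) {n : ℕ} (h : N ≤ n) : svalsNat A n = 0 :=
  dif_neg (not_lt.mpr h)

lemma svalsNat_coe (A : Matrix (Fin N) (Fin N) ℂ) (k : Fin N) : svalsNat A k = svalsDesc A k :=
  svalsNat_of_lt A k.isLt

lemma svalsNat_nonneg (A : Matrix (Fin N) (Fin N) ℂ) (n : ℕ) : 0 ≤ svalsNat A n := by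
  unfold svalsNat
  split_ifs
  exacts [svalsDesc_nonneg A _, le_rfl]

lemma svalsNat_le_l2_opNorm (A : Matrix (Fin N) (Fin N) ℂ) (n : ℕ) : svalsNat A n ≤ ‖A‖ := by
  unfold svalsNat
  split_ifs
  exacts [svalsDesc_le_l2_opNorm A _, norm_nonneg A]

lemma svalsNat_antitone (A : Matrix (Fin N) (Fin N) ℂ) : Antitone (svalsNat A) := by
  intro m n hmn
  by_cases hn : n < N
  · rw [svalsNat_of_lt A hn, svalsNat_of_lt A (hmn.trans_lt hn)]
    exact svalsDesc_antitone A (Fin.mk_le_mk.mpr hmn)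
  · rw [svalsNat_of_le A (not_lt.mp hn)]
    exact svalsNat_nonneg A m

lemma abs_svalsNat_add_sub_le (P Q : Matrix (Fin N) (Fin N) ℂ) (n : ℕ) :
    |svalsNat (P + Q) n - svalsNat P n| ≤ ‖Q‖ := by
  by_cases hn : n < N
  · have hback := svalsDesc_add_le (P + Q) (-Q) ⟨n, hn⟩
    rw [add_neg_cancel_right, norm_neg] at hback
    rw [svalsNat_of_lt _ hn, svalsNat_of_lt _ hn, abs_sub_le_iff]
    constructor <;> linarith [svalsDesc_add_le P Q ⟨n, hn⟩]
  · simp [svalsNat_of_le _ (not_lt.mp hn)]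

lemma svalsNat_add_le_of_rank_le (P R : Matrix (Fin N) (Fin N) ℂ) {r : ℕ} (hR : R.rank ≤ r)
    (n : ℕ) : svalsNat (P + R) (n + r) ≤ svalsNat P n := by
  by_cases h : n + r < N
  · rw [svalsNat_of_lt _ h, svalsNat_of_lt _ (by omega)]
    exact svalsDesc_add_le_of_rank_le P R hR rfl
  · rw [svalsNat_of_le _ (not_lt.mp h)]
    exact svalsNat_nonneg P n

lemma svalsNat_smul_of_norm_eq_one (A : Matrix (Fin N) (Fin N) ℂ) {u : ℂ} (hu : ‖u‖ = 1) :
    svalsNat (u • A) = svalsNat A := by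
  ext n
  simp [svalsNat, svalsDesc_smul_of_norm_eq_one A hu]

end PaddedSingularValues

lemma sum_Ico_abs_sub_le_of_interlace {s t : ℕ → ℝ} (hs : Antitone s) (hs0 : ∀ k, 0 ≤ s k)
    (hlow : ∀ k, s (k + 1) ≤ t k) (hup : ∀ k, t (k + 1) ≤ s k) (n : ℕ) :
    ∑ k ∈ Ico 1 n, |t k - s k| ≤ s 0 + s 1 := by
  have hterm : ∀ k, |t (1 + k) - s (1 + k)| ≤ (s k - s (k + 1)) + (s (k + 1) - s (k + 2)) := by
    intro k
    rw [add_comm 1 k, abs_sub_le_iff]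
    constructor <;> linarith [hup k, hlow (k + 1), hs k.le_succ, hs (k + 1).le_succ]
  rw [sum_Ico_eq_sum_range]
  refine (sum_le_sum fun k _ => hterm k).trans ?_
  rw [sum_add_distrib, sum_range_sub' s, sum_range_sub' (fun k => s (k + 1))]
  linarith [hs0 (n - 1), hs0 (n - 1 + 1)]

lemma Matrix.rank_neg {m n R : Type*} [Fintype n] [CommRing R] (A : Matrix m n R) :
    (-A).rank = A.rank := by
  rw [← neg_one_smul R A]
  exact rank_smul_of_mem_nonZeroDivisors A (isUnit_one.neg.mem_nonZeroDivisors)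

lemma sum_Ico_abs_svalsNat_sub_le {N : ℕ} (P R Q : Matrix (Fin N) (Fin N) ℂ) (hR : R.rank ≤ 1) :
    ∑ n ∈ Ico 1 N, |svalsNat (P + R + Q) n - svalsNat P n| ≤ N * ‖Q‖ + 2 * ‖P‖ := by
  have hlow (k : ℕ) : svalsNat P (k + 1) ≤ svalsNat (P + R) k := by
    simpa using svalsNat_add_le_of_rank_le (P + R) (-R) (by rwa [rank_neg]) k
  have htel := sum_Ico_abs_sub_le_of_interlace (svalsNat_antitone P) (svalsNat_nonneg P) hlow
    (svalsNat_add_le_of_rank_le P R hR) N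
  calc ∑ n ∈ Ico 1 N, |svalsNat (P + R + Q) n - svalsNat P n|
      ≤ ∑ n ∈ Ico 1 N, (‖Q‖ + |svalsNat (P + R) n - svalsNat P n|) :=
        sum_le_sum fun n _ => (abs_sub_le _ _ _).trans
          (add_le_add_left (abs_svalsNat_add_sub_le _ _ n) _)
    _ ≤ N * ‖Q‖ + (svalsNat P 0 + svalsNat P 1) := by
        rw [sum_add_distrib, sum_const, Nat.card_Ico, nsmul_eq_mul]
        gcongr
        exact_mod_cast Nat.sub_le N 1
    _ ≤ N * ‖Q‖ + 2 * ‖P‖ := by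
        linarith [svalsNat_le_l2_opNorm P 0, svalsNat_le_l2_opNorm P 1]

lemma sum_filter_pos_fin_eq_sum_Ico {M : Type*} [AddCommMonoid M] (f : ℕ → M) (N : ℕ) :
    ∑ k ∈ univ.filter (fun k : Fin N => 0 < (k : ℕ)), f k = ∑ n ∈ Ico 1 N, f n := by
  rw [sum_filter, Fin.sum_univ_eq_sum_range (fun n => if 0 < n then f n else 0), ← sum_filter]
  congr 1
  ext n
  simp only [mem_filter, mem_range, mem_Ico]
  omega

lemma rank_smul_allOnes_le {N : ℕ} (c : ℂ) : (c • allOnes N).rank ≤ 1 := by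
  have h : c • allOnes N = vecMulVec (fun _ => c) (fun _ => 1) := by
    ext i j
    simp [allOnes, vecMulVec]
  rw [h]
  exact rank_vecMulVec_le _ _

lemma norm_inv_smul_entrywiseExp_sub_le {N : ℕ} (A : Matrix (Fin N) (Fin N) ℂ) {γ : ℝ}
    (hγ0 : 0 < γ) (hγ1 : γ ≤ 1) :
    ‖(γ : ℂ)⁻¹ • entrywiseExp ((Complex.I * γ) • A) - (Complex.I • A + (γ : ℂ)⁻¹ • allOnes N)‖
      ≤ γ * Real.exp ‖A‖ := by
  have hγ : ‖Complex.I * (γ : ℂ)‖ = γ := by simp [hγ0.le]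
  have hγ' : (γ : ℂ) ≠ 0 := by exact_mod_cast hγ0.ne'
  have hdecomp : (γ : ℂ)⁻¹ • entrywiseExp ((Complex.I * γ) • A)
        - (Complex.I • A + (γ : ℂ)⁻¹ • allOnes N)
      = (γ : ℂ)⁻¹ • (entrywiseExp ((Complex.I * γ) • A) - allOnes N - (Complex.I * γ) • A) := by
    simp only [smul_sub, smul_smul, mul_left_comm _ Complex.I, inv_mul_cancel₀ hγ', mul_one]
    abel
  calc _ ≤ γ⁻¹ * (γ ^ 2 * Real.exp ‖A‖) := by
        rw [hdecomp, norm_smul, norm_inv, Complex.norm_real, Real.norm_of_nonneg hγ0.le]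
        gcongr
        simpa [hγ] using norm_entrywiseExp_smul_sub_le A (hγ.trans_le hγ1)
    _ = γ * Real.exp ‖A‖ := by field_simp

lemma opNorm_eq_l2_opNorm {m n : ℕ} (A : Matrix (Fin m) (Fin n) ℂ) : opNorm A = ‖A‖ := rfl

/-- for `A ∈ M_N(ℂ)` and `0 < γ < 1`, with `X = exp_∘(iγA)`,
`(1/N) Σ_{k=2}^N |σ_k(X/γ) − σ_k(A)| ≤ γ exp(‖A‖) + 2‖A‖/N`.  (The sum runs over all
indices except the first, i.e. over 0-based indices `k` with `0 < k`.) -/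
theorem average_abs_svals_tail_entrywiseExp {N : ℕ}
    (A : Matrix (Fin N) (Fin N) ℂ) (γ : ℝ) (hγ0 : 0 < γ) (hγ1 : γ < 1) :
    (1 / (N : ℝ)) *
        ∑ k ∈ Finset.univ.filter (fun k : Fin N => 0 < (k : ℕ)),
          |svalsDesc (((γ : ℂ))⁻¹ • entrywiseExp ((Complex.I * (γ : ℂ)) • A)) k
            - svalsDesc A k|
      ≤ γ * Real.exp (opNorm A) + 2 * opNorm A / (N : ℝ) := by
  set M := (γ : ℂ)⁻¹ • entrywiseExp ((Complex.I * (γ : ℂ)) • A)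
  set E := M - (Complex.I • A + (γ : ℂ)⁻¹ • allOnes N)
  have hE : ‖E‖ ≤ γ * Real.exp ‖A‖ := norm_inv_smul_entrywiseExp_sub_le A hγ0 hγ1.le
  have hsum := sum_Ico_abs_svalsNat_sub_le (Complex.I • A) ((γ : ℂ)⁻¹ • allOnes N) E
    (rank_smul_allOnes_le _)
  rw [add_sub_cancel, svalsNat_smul_of_norm_eq_one A Complex.norm_I, norm_smul, Complex.norm_I,
    one_mul] at hsum
  simp_rw [opNorm_eq_l2_opNorm, ← svalsNat_coe]
  rw [sum_filter_pos_fin_eq_sum_Ico (fun n => |svalsNat M n - svalsNat A n|)]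
  calc _ ≤ 1 / (N : ℝ) * (N * ‖E‖ + 2 * ‖A‖) := by gcongr
    _ = (N / N : ℝ) * ‖E‖ + 2 * ‖A‖ / N := by ring
    _ ≤ 1 * (γ * Real.exp ‖A‖) + 2 * ‖A‖ / N := by
        gcongr
        exact div_self_le_one _
    _ = γ * Real.exp ‖A‖ + 2 * ‖A‖ / N := by rw [one_mul]
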